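/- For every integer k ≥ 1, the matrices A_k and B_k satisfy A_kᵀ B_k = M^k, the k-th matrix power of M. -/
import Mathlib



open Matrix

lemma markov_pathSum {ι : Type*} [Fintype ι] [DecidableEq ι] (M : Matrix ι ι ℝ) :
    ∀ (k : ℕ) (i j : ι),
      (∑ m : Fin (k + 1) → ι,
        if m 0 = i ∧ m (Fin.last k) = j then
          ∏ t : Fin k, M (m t.castSucc) (m t.succ) else 0) = (M ^ k) i j := by
  intro k
  induction k with
  | zero =>
    intro i j
    rw [pow_zero, Matrix.one_apply]
    rw [Fintype.sum_equiv (Equiv.funUnique (Fin 1) ι)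
      _ (fun x => if x = i ∧ x = j then 1 else 0)]
    · by_cases h : i = j
      · subst h; simp
      · rw [if_neg h]
        refine Finset.sum_eq_zero fun x _ => if_neg ?_
        rintro ⟨rfl, rfl⟩; exact h rfl
    · intro m
      simp [Fin.last]
  | succ k ih =>
    intro i j
    have key := Fintype.sum_equiv (Fin.snocEquiv (fun _ => ι))
      (fun p : ι × (Fin (k+1) → ι) =>
        if p.2 0 = i ∧ p.1 = j then
          (∏ t : Fin k, M (p.2 t.castSucc) (p.2 t.succ)) * M (p.2 (Fin.last k)) p.1
        else 0)
      (fun m : Fin (k + 2) → ι =>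
        if m 0 = i ∧ m (Fin.last (k+1)) = j then
          ∏ t : Fin (k + 1), M (m t.castSucc) (m t.succ) else 0)
      ?_
    · have rhs_eq : (M ^ (k + 1)) i j = ∑ p : Fin (k + 1) → ι, ∑ x : ι,
          (if p 0 = i ∧ p (Fin.last k) = x then
            ∏ t : Fin k, M (p t.castSucc) (p t.succ) else 0) * M x j := by
        calc (M ^ (k + 1)) i j = ∑ x : ι, (M ^ k) i x * M x j := by
              rw [pow_succ, Matrix.mul_apply]
          _ = ∑ x : ι, ∑ p : Fin (k + 1) → ι,
              (if p 0 = i ∧ p (Fin.last k) = x then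
                ∏ t : Fin k, M (p t.castSucc) (p t.succ) else 0) * M x j :=
            Finset.sum_congr rfl fun x _ => by rw [← ih i x, Finset.sum_mul]
          _ = _ := Finset.sum_comm
      rw [← key, Fintype.sum_prod_type, Finset.sum_comm, rhs_eq]
      refine Finset.sum_congr rfl fun p _ => ?_
      by_cases h1 : p 0 = i
      · simp only [h1, true_and, ite_mul, zero_mul]
        rw [Finset.sum_ite_eq' Finset.univ j, Finset.sum_ite_eq Finset.univ (p (Fin.last k))]
        simp
      · simp [h1]
    · rintro ⟨x, p⟩
      have h0 : (Fin.snoc p x : Fin (k+2) → ι) 0 = p 0 := by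
        rw [show (0 : Fin (k+2)) = (0 : Fin (k+1)).castSucc by simp, Fin.snoc_castSucc]
      have hlast : (Fin.snoc p x : Fin (k+2) → ι) (Fin.last (k+1)) = x := Fin.snoc_last _ _
      have hprod : (∏ t : Fin (k+1), M ((Fin.snoc p x : Fin (k+2) → ι) t.castSucc)
            ((Fin.snoc p x : Fin (k+2) → ι) t.succ)) =
          (∏ t : Fin k, M (p t.castSucc) (p t.succ)) * M (p (Fin.last k)) x := by
        rw [Fin.prod_univ_castSucc]
        congr 1
        · refine Finset.prod_congr rfl fun t _ => ?_
          rw [Fin.snoc_castSucc, Fin.succ_castSucc, Fin.snoc_castSucc]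
        · rw [Fin.snoc_castSucc, Fin.succ_last, Fin.snoc_last]
      simp only [Fin.snocEquiv, Equiv.coe_fn_mk, h0, hlast, hprod]

/-- The matrix `A_k`, with rows indexed by `(k+1)`-tuples `(m_0,…,m_k)` and columns by `ι`:
`A_k[(m_0,…,m_k), i] = √(M(m_0,m_1)⋯M(m_{k−1},m_k))` if `m_0 = i`, and `0` otherwise. -/
noncomputable def markovA {ι : Type*} [Fintype ι] [DecidableEq ι]
    (M : Matrix ι ι ℝ) (k : ℕ) : Matrix (Fin (k + 1) → ι) ι ℝ :=
  Matrix.of fun m i =>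
    if m 0 = i then Real.sqrt (∏ j : Fin k, M (m j.castSucc) (m j.succ)) else 0

/-- The matrix `B_k`, with rows indexed by `(k+1)`-tuples `(m_0,…,m_k)` and columns by `ι`:
`B_k[(m_0,…,m_k), i] = √(M(m_0,m_1)⋯M(m_{k−1},m_k))` if `m_k = i`, and `0` otherwise. -/
noncomputable def markovB {ι : Type*} [Fintype ι] [DecidableEq ι]
    (M : Matrix ι ι ℝ) (k : ℕ) : Matrix (Fin (k + 1) → ι) ι ℝ :=
  Matrix.of fun m i =>
    if m (Fin.last k) = i then Real.sqrt (∏ j : Fin k, M (m j.castSucc) (m j.succ)) else 0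

/-- For every `k ≥ 1`, `A_kᵀ B_k = M^k`. -/
theorem markov_discriminant_eq_pow
    {ι : Type*} [Fintype ι] [DecidableEq ι] [Nonempty ι] (M : Matrix ι ι ℝ)
    (hsymm : M = Mᵀ) (hnonneg : ∀ i j, 0 ≤ M i j) (hstoch : ∀ i, ∑ j : ι, M i j = 1)
    (k : ℕ) (hk : 1 ≤ k) :
    (markovA M k)ᵀ * markovB M k = M ^ k := by
  ext i j
  rw [Matrix.mul_apply]
  have key : ∀ m : Fin (k + 1) → ι, (markovA M k)ᵀ i m * markovB M k m j =
      if m 0 = i ∧ m (Fin.last k) = j then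
        ∏ t : Fin k, M (m t.castSucc) (m t.succ) else 0 := by
    intro m
    simp only [markovA, markovB, Matrix.transpose_apply, Matrix.of_apply]
    by_cases h1 : m 0 = i <;> by_cases h2 : m (Fin.last k) = j <;> simp [h1, h2]
    exact Real.mul_self_sqrt (Finset.prod_nonneg fun t _ => hnonneg _ _)
  rw [Finset.sum_congr rfl fun m _ => key m]
  exact markov_pathSum M k i j
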